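/- arXiv:2605.20269 — 2 statements merged into one kernel-verified Lean document; each statement's English description precedes it below -/
import Mathlib

section
/- For d ≥ 2, the operator K^{-1}(N) = ((d+2)/(2d))·N − (tr(N)/(2d))·I_d on symmetric d×d matrices satisfies ‖K^{-1}(N)‖_op ≤ ‖N‖_op for every symmetric N, i.e., its operator-norm-to-operator-norm norm is at most 1. -/
open Matrix

/-- Spectral (operator) norm of a square real matrix, via its action on Euclidean space. -/
noncomputable def opNorm {d : ℕ} (M : Matrix (Fin d) (Fin d) ℝ) : ℝ :=
  ‖(Matrix.toEuclideanCLM (𝕜 := ℝ) (n := Fin d) M :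
      EuclideanSpace ℝ (Fin d) →L[ℝ] EuclideanSpace ℝ (Fin d))‖

/-- The operator `K⁻¹(N) = ((d+2)/(2d))·N − (tr(N)/(2d))·I`. -/
noncomputable def Kinv (d : ℕ) (N : Matrix (Fin d) (Fin d) ℝ) : Matrix (Fin d) (Fin d) ℝ :=
  (((d : ℝ) + 2) / (2 * (d : ℝ))) • N - (N.trace / (2 * (d : ℝ))) • (1 : Matrix (Fin d) (Fin d) ℝ)

/-!
`K⁻¹` commutes with unitary conjugation and the operator norm is unitarily invariant, so after
diagonalizing `N` the claim becomes one about the vector `λ` of eigenvalues: the sup norm of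
`μ i = ((d+2)/(2d)) λ i − (∑ j, λ j)/(2d)` is at most that of `λ`. Each `μ i` is a linear
combination of the `λ j` whose coefficients have absolute values summing to `1`.
-/

open Finset Unitary

noncomputable def kinvDiag {ι : Type*} [Fintype ι] (v : ι → ℝ) : ι → ℝ :=
  fun i => ((Fintype.card ι : ℝ) + 2) / (2 * Fintype.card ι) * v i
    - (∑ j, v j) / (2 * Fintype.card ι)

theorem abs_kinvDiag_le_of_abs_le {ι : Type*} [Fintype ι] {v : ι → ℝ} {c : ℝ}
    (hv : ∀ j, |v j| ≤ c) (i : ι) : |kinvDiag v i| ≤ c := by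
  classical
  have hcard : 1 ≤ Fintype.card ι := Fintype.card_pos_iff.mpr ⟨i⟩
  set n : ℝ := (Fintype.card ι : ℝ)
  have hn : 1 ≤ n := Nat.one_le_cast.mpr hcard
  have hrest : |∑ j ∈ univ.erase i, v j| ≤ (n - 1) * c :=
    calc |∑ j ∈ univ.erase i, v j| ≤ ∑ j ∈ univ.erase i, |v j| := abs_sum_le_sum_abs _ _
      _ ≤ (univ.erase i).card • c := sum_le_card_nsmul _ _ _ fun j _ => hv j
      _ = (n - 1) * c := by
        rw [card_erase_of_mem (mem_univ i), nsmul_eq_mul, card_univ, Nat.cast_sub hcard,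
          Nat.cast_one]
  have hsplit : kinvDiag v i = ((n + 1) * v i - ∑ j ∈ univ.erase i, v j) / (2 * n) := by
    rw [kinvDiag, ← add_sum_erase _ _ (mem_univ i)]
    field_simp
    ring
  rw [hsplit, abs_div, abs_of_pos (by linarith : (0 : ℝ) < 2 * n), div_le_iff₀ (by linarith)]
  obtain ⟨hvi₁, hvi₂⟩ := abs_le.mp (hv i)
  obtain ⟨hr₁, hr₂⟩ := abs_le.mp hrest
  rw [abs_le]
  constructor <;> nlinarith

theorem norm_kinvDiag_le {ι : Type*} [Fintype ι] (v : ι → ℝ) : ‖kinvDiag v‖ ≤ ‖v‖ := by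
  refine (pi_norm_le_iff_of_nonneg (norm_nonneg v)).mpr fun i => ?_
  rw [Real.norm_eq_abs]
  exact abs_kinvDiag_le_of_abs_le
    (fun j => (Real.norm_eq_abs _).symm.trans_le (norm_le_pi_norm v j)) i

theorem Kinv_diagonal (d : ℕ) (v : Fin d → ℝ) : Kinv d (diagonal v) = diagonal (kinvDiag v) := by
  ext i j
  rcases eq_or_ne i j with rfl | hij
  · simp [Kinv, kinvDiag, trace_diagonal]
  · simp [Kinv, hij]

theorem Kinv_conjStarAlgAut (d : ℕ) (U : unitary (Matrix (Fin d) (Fin d) ℝ))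
    (A : Matrix (Fin d) (Fin d) ℝ) :
    Kinv d (conjStarAlgAut ℝ _ U A) = conjStarAlgAut ℝ _ U (Kinv d A) := by
  have htrace : (conjStarAlgAut ℝ _ U A).trace = A.trace := by
    rw [conjStarAlgAut_apply, trace_mul_cycle, coe_star_mul_self, one_mul]
  rw [Kinv, Kinv, htrace, map_sub, map_smul, map_smul, map_one]

open scoped Matrix.Norms.L2Operator

theorem opNorm_eq_l2_opNorm {d : ℕ} (A : Matrix (Fin d) (Fin d) ℝ) : opNorm A = ‖A‖ := rfl

theorem opNorm_conjStarAlgAut {d : ℕ} (U : unitary (Matrix (Fin d) (Fin d) ℝ))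
    (A : Matrix (Fin d) (Fin d) ℝ) : opNorm (conjStarAlgAut ℝ _ U A) = opNorm A := by
  rw [opNorm_eq_l2_opNorm, opNorm_eq_l2_opNorm, conjStarAlgAut_apply, ← coe_star,
    CStarRing.norm_mul_coe_unitary, CStarRing.norm_coe_unitary_mul]

theorem opNorm_diagonal {d : ℕ} (v : Fin d → ℝ) : opNorm (diagonal v) = ‖v‖ :=
  l2_opNorm_diagonal v

theorem Kinv_opNorm_le_general (d : ℕ) :
    ∀ N : Matrix (Fin d) (Fin d) ℝ, N.IsSymm → opNorm (Kinv d N) ≤ opNorm N := by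
  intro N hN
  have hH : N.IsHermitian := by
    rwa [IsHermitian, conjTranspose_eq_transpose_of_trivial]
  have hdiag : N = conjStarAlgAut ℝ _ hH.eigenvectorUnitary (diagonal hH.eigenvalues) := by
    simpa using hH.spectral_theorem
  rw [hdiag, Kinv_conjStarAlgAut, opNorm_conjStarAlgAut, opNorm_conjStarAlgAut, Kinv_diagonal,
    opNorm_diagonal, opNorm_diagonal]
  exact norm_kinvDiag_le hH.eigenvalues

/-- **`K⁻¹` is an op-norm contraction on symmetric matrices** for `d ≥ 2`. -/
theorem Kinv_opNorm_le (d : ℕ) (hd : 2 ≤ d) :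
    ∀ N : Matrix (Fin d) (Fin d) ℝ, N.IsSymm → opNorm (Kinv d N) ≤ opNorm N :=
  Kinv_opNorm_le_general d
end

section
/- Let P and Q be orthogonal projectors in R^d of equal rank r. Then ‖(I − P)Q‖_op = ‖P − Q‖_op. -/
open Matrix

/-!
Write `p`, `q` for the orthogonal projections onto `U`, `V`. Since `p - q = p (1 - q) - (1 - p) q`
is an orthogonal sum, `‖p - q‖ ≤ max ‖(1 - p) q‖ ‖(1 - q) p‖`, and `(1 - p) q = (1 - p) (q - p)`
gives `‖(1 - p) q‖ ≤ ‖p - q‖`. Equal dimension is needed only for `‖(1 - q) p‖ ≤ ‖(1 - p) q‖ =: a`.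
If `a < 1`, then `p` is injective on `V`, hence maps `V` onto `U`; for `y = p z` with `z ∈ V`,
`‖y‖² = ⟪z, q y⟫ ≤ ‖z‖ ‖q y‖` and `(1 - a²) ‖z‖² ≤ ‖y‖²`, so `(1 - a²) ‖y‖² ≤ ‖q y‖²`,
i.e. `‖(1 - q) y‖ ≤ a ‖y‖`.
-/

open Module

namespace Submodule

open ContinuousLinearMap

variable {𝕜 E : Type*} [RCLike 𝕜] [NormedAddCommGroup E] [InnerProductSpace 𝕜 E]
  (U V : Submodule 𝕜 E) [U.HasOrthogonalProjection] [V.HasOrthogonalProjection]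

theorem norm_starProjection_apply_le_of_mem {z : E} (hz : z ∈ V) :
    ‖U.starProjection z‖ ≤ ‖U.starProjection * V.starProjection‖ * ‖z‖ := by
  simpa only [mul_apply_eq_comp, comp_apply, starProjection_eq_self_iff.mpr hz]
    using le_opNorm (U.starProjection * V.starProjection) z

theorem norm_orthogonal_starProjection_mul_le_norm_sub :
    ‖Uᗮ.starProjection * V.starProjection‖ ≤ ‖U.starProjection - V.starProjection‖ := by
  have hU : Uᗮ.starProjection * U.starProjection = 0 :=
    (isOrtho_orthogonal_left U).starProjection_comp_starProjection
  have : Uᗮ.starProjection * V.starProjection =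
      Uᗮ.starProjection * (V.starProjection - U.starProjection) := by
    rw [mul_sub, hU, sub_zero]
  rw [this, norm_sub_rev]
  exact (norm_mul_le _ _).trans (mul_le_of_le_one_left (norm_nonneg _) Uᗮ.starProjection_norm_le)

theorem norm_starProjection_mul_orthogonal_eq [CompleteSpace E] :
    ‖U.starProjection * Vᗮ.starProjection‖ = ‖Vᗮ.starProjection * U.starProjection‖ := by
  rw [← norm_star, star_mul, (isSelfAdjoint_starProjection U).star_eq,
    (isSelfAdjoint_starProjection Vᗮ).star_eq]

theorem norm_starProjection_sub_le_max [CompleteSpace E] :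
    ‖U.starProjection - V.starProjection‖ ≤
      max ‖Uᗮ.starProjection * V.starProjection‖ ‖Vᗮ.starProjection * U.starProjection‖ := by
  set m := max ‖Uᗮ.starProjection * V.starProjection‖ ‖Vᗮ.starProjection * U.starProjection‖
  refine opNorm_le_bound _ ((norm_nonneg _).trans (le_max_left _ _)) fun x => ?_
  have hsplit : (U.starProjection - V.starProjection) x =
      U.starProjection (Vᗮ.starProjection x) - Uᗮ.starProjection (V.starProjection x) := by
    simp only [starProjection_orthogonal', _root_.sub_apply, map_sub]
    abel
  have horth : inner 𝕜 (U.starProjection (Vᗮ.starProjection x))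
      (Uᗮ.starProjection (V.starProjection x)) = 0 :=
    inner_right_of_mem_orthogonal (U.starProjection_apply_mem _) (Uᗮ.starProjection_apply_mem _)
  have h1 : ‖U.starProjection (Vᗮ.starProjection x)‖ ≤ m * ‖Vᗮ.starProjection x‖ := by
    refine (U.norm_starProjection_apply_le_of_mem Vᗮ (Vᗮ.starProjection_apply_mem x)).trans ?_
    rw [norm_starProjection_mul_orthogonal_eq]
    gcongr
    exact le_max_right _ _
  have h2 : ‖Uᗮ.starProjection (V.starProjection x)‖ ≤ m * ‖V.starProjection x‖ :=
    (Uᗮ.norm_starProjection_apply_le_of_mem V (V.starProjection_apply_mem x)).trans <|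
      mul_le_mul_of_nonneg_right (le_max_left _ _) (norm_nonneg _)
  have hx := norm_sq_eq_add_norm_sq_starProjection x V
  refine le_of_sq_le_sq ?_ (by positivity)
  rw [hsplit, @norm_sub_sq 𝕜, horth, map_zero, mul_zero, sub_zero, mul_pow, hx]
  have h1' := pow_le_pow_left₀ (norm_nonneg _) h1 2
  have h2' := pow_le_pow_left₀ (norm_nonneg _) h2 2
  rw [mul_pow] at h1' h2'
  linarith

theorem exists_mem_starProjection_eq_of_norm_lt_one [FiniteDimensional 𝕜 U] [FiniteDimensional 𝕜 V]
    (hUV : finrank 𝕜 V = finrank 𝕜 U) (h : ‖Uᗮ.starProjection * V.starProjection‖ < 1)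
    {y : E} (hy : y ∈ U) : ∃ z ∈ V, U.starProjection z = y := by
  let f : V →ₗ[𝕜] U := (U.orthogonalProjectionOnto : E →ₗ[𝕜] U) ∘ₗ V.subtype
  have hf : Function.Injective f := by
    refine (injective_iff_map_eq_zero f).mpr fun ⟨z, hz⟩ hfz => ?_
    have hUz : U.starProjection z = 0 := congrArg Subtype.val hfz
    have hle := Uᗮ.norm_starProjection_apply_le_of_mem V hz
    rw [starProjection_orthogonal_val, hUz, sub_zero] at hle
    have : ‖z‖ = 0 := by nlinarith [norm_nonneg z]
    simpa using this
  obtain ⟨⟨z, hz⟩, hfz⟩ :=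
    (LinearMap.injective_iff_surjective_of_finrank_eq_finrank hUV).mp hf ⟨y, hy⟩
  exact ⟨z, hz, congrArg Subtype.val hfz⟩

theorem one_sub_sq_mul_norm_sq_le_of_finrank_eq [FiniteDimensional 𝕜 U] [FiniteDimensional 𝕜 V]
    (hUV : finrank 𝕜 V = finrank 𝕜 U) {y : E} (hy : y ∈ U) :
    (1 - ‖Uᗮ.starProjection * V.starProjection‖ ^ 2) * ‖y‖ ^ 2 ≤ ‖V.starProjection y‖ ^ 2 := by
  set a := ‖Uᗮ.starProjection * V.starProjection‖
  rcases le_or_gt 1 a with ha | ha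
  · exact (mul_nonpos_of_nonpos_of_nonneg (by nlinarith) (sq_nonneg _)).trans (sq_nonneg _)
  obtain ⟨z, hz, rfl⟩ := exists_mem_starProjection_eq_of_norm_lt_one U V hUV ha hy
  have hz_sq : (1 - a ^ 2) * ‖z‖ ^ 2 ≤ ‖U.starProjection z‖ ^ 2 := by
    have hperp := pow_le_pow_left₀ (norm_nonneg _) (Uᗮ.norm_starProjection_apply_le_of_mem V hz) 2
    nlinarith [norm_sq_eq_add_norm_sq_starProjection z U]
  have hy_sq : ‖U.starProjection z‖ ^ 2 ≤ ‖z‖ * ‖V.starProjection (U.starProjection z)‖ := by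
    calc ‖U.starProjection z‖ ^ 2
        = RCLike.re (inner 𝕜 (V.starProjection z) (U.starProjection z)) := by
          rw [starProjection_eq_self_iff.mpr hz, ← inner_self_eq_norm_sq (𝕜 := 𝕜),
            inner_starProjection_left_eq_right,
            starProjection_eq_self_iff.mpr (U.starProjection_apply_mem z)]
      _ = RCLike.re (inner 𝕜 z (V.starProjection (U.starProjection z))) := by
          rw [inner_starProjection_left_eq_right]
      _ ≤ ‖z‖ * ‖V.starProjection (U.starProjection z)‖ := re_inner_le_norm _ _
  rcases eq_or_ne z 0 with rfl | hz0
  · simp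
  have hsq := pow_le_pow_left₀ (sq_nonneg _) hy_sq 2
  refine le_of_mul_le_mul_left (a := ‖z‖ ^ 2) ?_ (by positivity)
  nlinarith [mul_le_mul_of_nonneg_right hz_sq (sq_nonneg ‖U.starProjection z‖)]

theorem norm_orthogonal_starProjection_mul_le_of_finrank_eq [FiniteDimensional 𝕜 U]
    [FiniteDimensional 𝕜 V] (hUV : finrank 𝕜 V = finrank 𝕜 U) :
    ‖Vᗮ.starProjection * U.starProjection‖ ≤ ‖Uᗮ.starProjection * V.starProjection‖ := by
  refine opNorm_le_bound _ (norm_nonneg _) fun x => ?_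
  have hy := one_sub_sq_mul_norm_sq_le_of_finrank_eq U V hUV (U.starProjection_apply_mem x)
  have hpyth := norm_sq_eq_add_norm_sq_starProjection (U.starProjection x) V
  have hx := pow_le_pow_left₀ (norm_nonneg _) (U.norm_starProjection_apply_le x) 2
  refine le_of_sq_le_sq ?_ (by positivity)
  rw [mul_apply_eq_comp, mul_pow]
  nlinarith [mul_le_mul_of_nonneg_left hx (sq_nonneg ‖Uᗮ.starProjection * V.starProjection‖)]

theorem norm_orthogonal_starProjection_mul_eq_norm_sub [CompleteSpace E] [FiniteDimensional 𝕜 U]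
    [FiniteDimensional 𝕜 V] (hUV : finrank 𝕜 U = finrank 𝕜 V) :
    ‖Uᗮ.starProjection * V.starProjection‖ = ‖U.starProjection - V.starProjection‖ :=
  le_antisymm (U.norm_orthogonal_starProjection_mul_le_norm_sub V) <|
    (U.norm_starProjection_sub_le_max V).trans <|
      max_le le_rfl (U.norm_orthogonal_starProjection_mul_le_of_finrank_eq V hUV.symm)

end Submodule

theorem Matrix.exists_toEuclideanCLM_eq_starProjection {𝕜 n : Type*} [RCLike 𝕜] [Fintype n]
    [DecidableEq n] {M : Matrix n n 𝕜} (hM : M.IsHermitian) (hMM : IsIdempotentElem M) :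
    ∃ K : Submodule 𝕜 (EuclideanSpace 𝕜 n),
      toEuclideanCLM (𝕜 := 𝕜) M = K.starProjection ∧ finrank 𝕜 K = M.rank := by
  have hp : IsStarProjection (toEuclideanCLM (𝕜 := 𝕜) M) :=
    ⟨hMM.map _, hM.isSelfAdjoint.map _⟩
  obtain ⟨_, hK⟩ := isStarProjection_iff_eq_starProjection_range.mp hp
  refine ⟨_, hK, ?_⟩
  rw [coe_toEuclideanCLM_eq_toEuclideanLin, toEuclideanLin_eq_toLin_orthonormal,
    rank_eq_finrank_range_toLin M (EuclideanSpace.basisFun n 𝕜).toBasis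
      (EuclideanSpace.basisFun n 𝕜).toBasis]

theorem projector_norm_identity_general
    (d r : ℕ)
    (P Q : Matrix (Fin d) (Fin d) ℝ)
    (hPsym : P.IsSymm) (hPidem : P * P = P) (hPrank : P.rank = r)
    (hQsym : Q.IsSymm) (hQidem : Q * Q = Q) (hQrank : Q.rank = r) :
    opNorm (((1 : Matrix (Fin d) (Fin d) ℝ) - P) * Q) = opNorm (P - Q) := by
  obtain ⟨U, hU, hUrank⟩ :=
    exists_toEuclideanCLM_eq_starProjection (isHermitian_iff_isSymm.mpr hPsym) hPidem
  obtain ⟨V, hV, hVrank⟩ :=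
    exists_toEuclideanCLM_eq_starProjection (isHermitian_iff_isSymm.mpr hQsym) hQidem
  rw [opNorm, opNorm, map_mul, map_sub, map_sub, map_one, hU, hV, ← U.starProjection_orthogonal']
  exact U.norm_orthogonal_starProjection_mul_eq_norm_sub V (by rw [hUrank, hVrank, hPrank, hQrank])

/-- **Same-rank projector identity**: for orthogonal projectors `P, Q` of equal rank,
`‖(I − P)Q‖ = ‖P − Q‖` in operator norm. -/
theorem projector_norm_identity
    (d r : ℕ) (hd : 1 ≤ d) (hr : 1 ≤ r) (hrd : r ≤ d)
    (P Q : Matrix (Fin d) (Fin d) ℝ)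
    (hPsym : P.IsSymm) (hPidem : P * P = P) (hPrank : P.rank = r)
    (hQsym : Q.IsSymm) (hQidem : Q * Q = Q) (hQrank : Q.rank = r) :
    opNorm (((1 : Matrix (Fin d) (Fin d) ℝ) - P) * Q) = opNorm (P - Q) :=
  projector_norm_identity_general d r P Q hPsym hPidem hPrank hQsym hQidem hQrank
end
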